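/- arXiv:2512.10857 — 4 statements merged into one kernel-verified Lean document; each statement's English description precedes it below -/
import Mathlib

section
/- Let d ≥ 1, let Σ and Σ₀ be real symmetric positive definite d×d matrices, let ε ≥ 0, set η = min(λ_min(Σ), λ_min(Σ₀)) > 0, and define Σ_k and B_k = (Σ_k (Σ_k + I)^{-1})^{(1+ε)/2} recursively by Σ_{k+1} = Σ_k + B_k (Σ − Σ_k) B_k. Let b, b₀ ∈ ℝ^d and define the vector sequence b_{k+1} = b_k + B_k (b − b_k). Then for every k ≥ 0, ‖b − b_k‖² ≤ (1 − η^{1+ε} (1+η)^{−(1+ε)})^k ‖b − b₀‖², where ‖·‖ is the Euclidean norm on ℝ^d. -/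
open Matrix

/-- Matrix power via the spectral functional calculus: for a real symmetric matrix `A`,
apply `x ↦ x ^ r` to the eigenvalues of `A` (junk value `0` if `A` is not symmetric). -/
noncomputable def matPow {d : ℕ} (A : Matrix (Fin d) (Fin d) ℝ) (r : ℝ) :
    Matrix (Fin d) (Fin d) ℝ :=
  if hA : A.IsHermitian then
    (hA.eigenvectorUnitary : Matrix (Fin d) (Fin d) ℝ) *
      Matrix.diagonal (fun i => hA.eigenvalues i ^ r) *
      star (hA.eigenvectorUnitary : Matrix (Fin d) (Fin d) ℝ)
  else 0

/-- Smallest eigenvalue of a real symmetric matrix (junk value `0` otherwise). -/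
noncomputable def lamMin {d : ℕ} (A : Matrix (Fin d) (Fin d) ℝ) : ℝ :=
  if hA : A.IsHermitian then ⨅ i, hA.eigenvalues i else 0

/-! Every matrix in the covariance recursion is a function of the current covariance `S`: with
`g(x) = (x / (x + 1)) ^ r`, `r = (1 + ε) / 2`, the gain is `B = g(S)` in the continuous functional
calculus. If `η ≤ S` and `η ≤ Σ` in the Loewner order, then
`S + B (Σ - S) B - η = ((x - η) (1 - g(x)²))(S) + B (Σ - η) B ≥ 0`, so `η ≤ S_k` for every `k`.
On the spectrum of `S_k` one then has `m := g(η) ≤ g ≤ 1`, hence `(1 - B_k)² ≤ 1 - m²`; since the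
error `b - b_k` is multiplied by `1 - B_k` at each step, it contracts by `1 - m²` in squared norm,
and `m² = η ^ (1 + ε) (1 + η) ^ (-(1 + ε))`. -/

open scoped MatrixOrder

lemma sum_sub_sq_eq_dotProduct {n : Type*} [Fintype n] (v w : n → ℝ) :
    ∑ i, (v i - w i) ^ 2 = (v - w) ⬝ᵥ (v - w) := by
  simp [dotProduct, sq]

section SpectralCalculus

variable {n : Type*} [Fintype n] [DecidableEq n]

lemma continuousOn_spectrum (f : ℝ → ℝ) (A : Matrix n n ℝ) : ContinuousOn f (spectrum ℝ A) :=
  A.finite_spectrum.continuousOn f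

lemma isSelfAdjoint_of_algebraMap_le {S : Matrix n n ℝ} {η : ℝ} (h : algebraMap ℝ _ η ≤ S) :
    IsSelfAdjoint S := by
  simpa using (IsSelfAdjoint.of_nonneg (sub_nonneg.2 h)).add (.algebraMap _ (.all η))

lemma nonneg_of_algebraMap_le {S : Matrix n n ℝ} {η : ℝ} (hη : 0 ≤ η)
    (h : algebraMap ℝ _ η ≤ S) : 0 ≤ S := by
  have hSa := isSelfAdjoint_of_algebraMap_le h
  rw [← map_zero (algebraMap ℝ (Matrix n n ℝ)), algebraMap_le_iff_le_spectrum hSa]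
  exact fun x hx => hη.trans ((algebraMap_le_iff_le_spectrum hSa).1 h x hx)

lemma mul_add_one_inv_eq_cfc {S : Matrix n n ℝ} (hS : 0 ≤ S) :
    S * (S + 1)⁻¹ = cfc (fun x : ℝ => x / (x + 1)) S := by
  have hspec : ∀ x ∈ spectrum ℝ S, x + 1 ≠ 0 := fun x hx =>
    (add_pos_of_nonneg_of_pos (spectrum_nonneg_of_nonneg hS hx) one_pos).ne'
  have hadd : S + 1 = cfc (fun x : ℝ => x + 1) S := by
    rw [cfc_add .., cfc_id' .., cfc_const_one ..]
  simp only [div_eq_mul_inv]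
  rw [cfc_mul _ _ S (continuousOn_spectrum _ S) (continuousOn_spectrum _ S),
    cfc_inv (fun x : ℝ => x + 1) S hspec, cfc_id' ℝ S, ← hadd, nonsing_inv_eq_ringInverse]

lemma algebraMap_le_add_cfc_mul_sub_mul {S Sig : Matrix n n ℝ} {η : ℝ} {f : ℝ → ℝ}
    (hS : algebraMap ℝ _ η ≤ S) (hSig : algebraMap ℝ _ η ≤ Sig)
    (hf : ∀ x ∈ spectrum ℝ S, f x ^ 2 ≤ 1) :
    algebraMap ℝ _ η ≤ S + cfc f S * (Sig - S) * cfc f S := by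
  have hSa := isSelfAdjoint_of_algebraMap_le hS
  set c := algebraMap ℝ (Matrix n n ℝ) η
  have hcont (g : ℝ → ℝ) := continuousOn_spectrum g S
  have hcfc : cfc (fun x => x - f x * (x - η) * f x) S = S - cfc f S * (S - c) * cfc f S := by
    rw [cfc_sub _ _ S (hcont _) (hcont _), cfc_mul _ _ S (hcont _) (hcont _),
      cfc_mul _ _ S (hcont _) (hcont _), cfc_sub _ _ S (hcont _) (hcont _), cfc_id' ℝ S,
      cfc_const η S]
  have hdamped : c ≤ S - cfc f S * (S - c) * cfc f S := by
    rw [← hcfc]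
    refine algebraMap_le_cfc _ _ S (fun x hx => ?_) (hcont _)
    have hηx : η ≤ x := (algebraMap_le_iff_le_spectrum hSa).1 hS x hx
    nlinarith [hf x hx]
  have hinjected : 0 ≤ cfc f S * (Sig - c) * cfc f S :=
    (cfc_predicate f S).conjugate_nonneg (sub_nonneg.2 hSig)
  calc c ≤ (S - cfc f S * (S - c) * cfc f S) + cfc f S * (Sig - c) * cfc f S :=
        le_add_of_le_of_nonneg hdamped hinjected
    _ = S + cfc f S * (Sig - S) * cfc f S := by noncomm_ring

lemma star_one_sub_cfc_mul_le {S : Matrix n n ℝ} (hS : IsSelfAdjoint S)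
    {f : ℝ → ℝ} {m : ℝ} (hm : 0 ≤ m) (hf : ∀ x ∈ spectrum ℝ S, f x ∈ Set.Icc m 1) :
    star (1 - cfc f S) * (1 - cfc f S) ≤ algebraMap ℝ _ (1 - m ^ 2) := by
  rw [((IsSelfAdjoint.one _).sub (cfc_predicate f S)).star_eq]
  have hcont (g : ℝ → ℝ) := continuousOn_spectrum g S
  rw [← cfc_const_one ℝ S, ← cfc_sub _ _ S (hcont _) (hcont _),
    ← cfc_mul _ _ S (hcont _) (hcont _)]
  refine cfc_le_algebraMap _ _ S (fun x hx => ?_) (hcont _)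
  obtain ⟨hmx, hx1⟩ := hf x hx
  nlinarith

lemma dotProduct_mulVec_self_le {A : Matrix n n ℝ} {c : ℝ} (h : star A * A ≤ algebraMap ℝ _ c)
    (e : n → ℝ) : (A *ᵥ e) ⬝ᵥ (A *ᵥ e) ≤ c * (e ⬝ᵥ e) := by
  have := (Matrix.le_iff.1 h).dotProduct_mulVec_nonneg e
  rw [sub_mulVec, Algebra.algebraMap_eq_smul_one, smul_mulVec, one_mulVec, dotProduct_sub,
    ← mulVec_mulVec, star_eq_conjTranspose, dotProduct_smul, dotProduct_mulVec,
    vecMul_conjTranspose] at this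
  simp only [star_trivial, smul_eq_mul] at this
  linarith

end SpectralCalculus

section GaussianIteration

variable {d : ℕ}

lemma matPow_eq_cfc {A : Matrix (Fin d) (Fin d) ℝ} (hA : A.IsHermitian) (r : ℝ) :
    matPow A r = cfc (fun x : ℝ => x ^ r) A := by
  rw [matPow, dif_pos hA, hA.cfc_eq, IsHermitian.cfc, Unitary.conjStarAlgAut_apply]
  rfl

lemma algebraMap_le_of_le_lamMin {A : Matrix (Fin d) (Fin d) ℝ} (hA : A.IsHermitian) {c : ℝ}
    (h : c ≤ lamMin A) : algebraMap ℝ _ c ≤ A := by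
  rw [algebraMap_le_iff_le_spectrum hA, hA.spectrum_real_eq_range_eigenvalues]
  rintro _ ⟨i, rfl⟩
  rw [lamMin, dif_pos hA] at h
  exact h.trans (ciInf_le (Set.finite_range _).bddBelow i)

lemma matPow_mul_add_one_inv {S : Matrix (Fin d) (Fin d) ℝ} (hS : 0 ≤ S) (r : ℝ) :
    matPow (S * (S + 1)⁻¹) r = cfc (fun x : ℝ => (x / (x + 1)) ^ r) S := by
  rw [mul_add_one_inv_eq_cfc hS, matPow_eq_cfc (cfc_predicate (fun x : ℝ => x / (x + 1)) S),
    ← cfc_comp' (fun x : ℝ => x ^ r) (fun x => x / (x + 1)) S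
      ((S.finite_spectrum.image _).continuousOn _) (continuousOn_spectrum _ S)]

lemma div_add_one_rpow_mem_Icc {η x r : ℝ} (hη : 0 ≤ η) (hx : η ≤ x) (hr : 0 ≤ r) :
    (x / (x + 1)) ^ r ∈ Set.Icc ((η / (η + 1)) ^ r) 1 := by
  have hx0 : 0 ≤ x := hη.trans hx
  constructor
  · refine Real.rpow_le_rpow (by positivity) ?_ hr
    rw [div_le_div_iff₀ (by positivity) (by positivity)]
    nlinarith
  · exact Real.rpow_le_one (by positivity) ((div_le_one (by positivity)).2 (by linarith)) hr

lemma gain_mem_Icc_of_mem_spectrum {S : Matrix (Fin d) (Fin d) ℝ} {η r : ℝ} (hη : 0 ≤ η)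
    (hr : 0 ≤ r) (hS : algebraMap ℝ _ η ≤ S) :
    ∀ x ∈ spectrum ℝ S, (x / (x + 1)) ^ r ∈ Set.Icc ((η / (η + 1)) ^ r) 1 :=
  fun x hx => div_add_one_rpow_mem_Icc hη
    ((algebraMap_le_iff_le_spectrum (isSelfAdjoint_of_algebraMap_le hS)).1 hS x hx) hr

lemma algebraMap_le_covariance_step {S Sig : Matrix (Fin d) (Fin d) ℝ} {η r : ℝ} (hη : 0 ≤ η)
    (hr : 0 ≤ r) (hS : algebraMap ℝ _ η ≤ S) (hSig : algebraMap ℝ _ η ≤ Sig) :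
    algebraMap ℝ _ η ≤
      S + matPow (S * (S + 1)⁻¹) r * (Sig - S) * matPow (S * (S + 1)⁻¹) r := by
  rw [matPow_mul_add_one_inv (nonneg_of_algebraMap_le hη hS)]
  refine algebraMap_le_add_cfc_mul_sub_mul hS hSig fun x hx => ?_
  obtain ⟨hlow, hup⟩ := gain_mem_Icc_of_mem_spectrum hη hr hS x hx
  exact pow_le_one₀ ((by positivity : (0 : ℝ) ≤ (η / (η + 1)) ^ r).trans hlow) hup

lemma mean_step_contraction {S : Matrix (Fin d) (Fin d) ℝ} {η r : ℝ} (hη : 0 ≤ η) (hr : 0 ≤ r)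
    (hS : algebraMap ℝ _ η ≤ S) (e : Fin d → ℝ) :
    ((1 - matPow (S * (S + 1)⁻¹) r) *ᵥ e) ⬝ᵥ ((1 - matPow (S * (S + 1)⁻¹) r) *ᵥ e) ≤
      (1 - ((η / (η + 1)) ^ r) ^ 2) * (e ⬝ᵥ e) := by
  rw [matPow_mul_add_one_inv (nonneg_of_algebraMap_le hη hS)]
  exact dotProduct_mulVec_self_le (star_one_sub_cfc_mul_le (isSelfAdjoint_of_algebraMap_le hS)
    (by positivity) (gain_mem_Icc_of_mem_spectrum hη hr hS)) e

end GaussianIteration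

theorem mean_iteration_linear_convergence_general
    {d : ℕ}
    (Sig Sig0 : Matrix (Fin d) (Fin d) ℝ) (hSig : Sig.PosDef) (hSig0 : Sig0.PosDef)
    (ε : ℝ) (hε : 0 ≤ ε)
    (η : ℝ) (hη : η = min (lamMin Sig) (lamMin Sig0)) (hηpos : 0 < η)
    (S B : ℕ → Matrix (Fin d) (Fin d) ℝ)
    (hS0 : S 0 = Sig0)
    (hB : ∀ k, B k = matPow (S k * (S k + 1)⁻¹) ((1 + ε) / 2))
    (hSrec : ∀ k, S (k + 1) = S k + B k * (Sig - S k) * B k)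
    (b b₀ : Fin d → ℝ) (bseq : ℕ → Fin d → ℝ)
    (hb0 : bseq 0 = b₀)
    (hbrec : ∀ k, bseq (k + 1) = bseq k + (B k).mulVec (b - bseq k)) :
    ∀ k : ℕ, (∑ i, (b i - bseq k i) ^ 2) ≤
      (1 - η ^ (1 + ε) * (1 + η) ^ (-(1 + ε))) ^ k * ∑ i, (b i - b₀ i) ^ 2 := by
  have hr : 0 ≤ (1 + ε) / 2 := by positivity
  set m := (η / (η + 1)) ^ ((1 + ε) / 2)
  have hrate : 1 - η ^ (1 + ε) * (1 + η) ^ (-(1 + ε)) = 1 - m ^ 2 := by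
    rw [← Real.rpow_natCast, ← Real.rpow_mul (by positivity),
      show (1 + ε) / 2 * ((2 : ℕ) : ℝ) = 1 + ε by push_cast; ring,
      Real.div_rpow hηpos.le (by positivity), Real.rpow_neg (by positivity), add_comm η 1,
      div_eq_mul_inv]
  have hSig_ge : algebraMap ℝ _ η ≤ Sig :=
    algebraMap_le_of_le_lamMin hSig.1 (hη ▸ min_le_left _ _)
  have hS_ge : ∀ k, algebraMap ℝ _ η ≤ S k := by
    intro k
    induction k with
    | zero => exact hS0 ▸ algebraMap_le_of_le_lamMin hSig0.1 (hη ▸ min_le_right _ _)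
    | succ k ih => rw [hSrec, hB]; exact algebraMap_le_covariance_step hηpos.le hr ih hSig_ge
  have hstep (k : ℕ) : (b - bseq (k + 1)) ⬝ᵥ (b - bseq (k + 1)) ≤
      (1 - m ^ 2) * ((b - bseq k) ⬝ᵥ (b - bseq k)) := by
    have herr : b - bseq (k + 1) = (1 - B k) *ᵥ (b - bseq k) := by
      rw [hbrec, sub_mulVec, one_mulVec]
      abel
    rw [herr, hB]
    exact mean_step_contraction hηpos.le hr (hS_ge k) _
  have hm : m ^ 2 ≤ 1 :=
    pow_le_one₀ (by positivity) (div_add_one_rpow_mem_Icc hηpos.le le_rfl hr).2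
  intro k
  simp only [hrate, sum_sub_sq_eq_dotProduct, ← hb0]
  exact le_geom (u := fun k => (b - bseq k) ⬝ᵥ (b - bseq k)) (by linarith) k fun k _ => hstep k

/-- **Gaussian AWGN mean iteration, linear convergence.**
With the covariance iterates `Σ_{k+1} = Σ_k + B_k (Sig - Σ_k) B_k`,
`B_k = (Σ_k (Σ_k + I)⁻¹)^((1+ε)/2)`, the mean iterates `b_{k+1} = b_k + B_k (b - b_k)`
satisfy `‖b - b_k‖² ≤ (1 - η^(1+ε) (1+η)^(-(1+ε)))^k ‖b - b₀‖²`, where `‖·‖` is the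
Euclidean norm (so `‖v‖² = ∑ i, v i ^ 2`). -/
theorem mean_iteration_linear_convergence
    {d : ℕ} (hd : 1 ≤ d)
    (Sig Sig0 : Matrix (Fin d) (Fin d) ℝ) (hSig : Sig.PosDef) (hSig0 : Sig0.PosDef)
    (ε : ℝ) (hε : 0 ≤ ε)
    (η : ℝ) (hη : η = min (lamMin Sig) (lamMin Sig0)) (hηpos : 0 < η)
    (S B : ℕ → Matrix (Fin d) (Fin d) ℝ)
    (hS0 : S 0 = Sig0)
    (hB : ∀ k, B k = matPow (S k * (S k + 1)⁻¹) ((1 + ε) / 2))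
    (hSrec : ∀ k, S (k + 1) = S k + B k * (Sig - S k) * B k)
    (b b₀ : Fin d → ℝ) (bseq : ℕ → Fin d → ℝ)
    (hb0 : bseq 0 = b₀)
    (hbrec : ∀ k, bseq (k + 1) = bseq k + (B k).mulVec (b - bseq k)) :
    ∀ k : ℕ, (∑ i, (b i - bseq k i) ^ 2) ≤
      (1 - η ^ (1 + ε) * (1 + η) ^ (-(1 + ε))) ^ k * ∑ i, (b i - b₀ i) ^ 2 :=
  mean_iteration_linear_convergence_general Sig Sig0 hSig hSig0 ε hε η hη hηpos S B hS0 hB hSrec b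
    b₀ bseq hb0 hbrec
end

section
/- Let A and S be real symmetric positive semidefinite d×d matrices and let B be a real symmetric d×d matrix with 0 ⪯ B ⪯ I that commutes with A. Then (I − B²) A + B S B ⪰ min(λ_min(A), λ_min(S)) · I in the Loewner order. -/
/-!
With `m = min (λmin A) (λmin S)` the matrix splits as `(I - B²)(A - m I) + B (S - m I) B`.
The second summand is a congruence of the positive semidefinite `S - m I`. In the first, both
factors are positive semidefinite (`I - B² = (I - B)(I + B)`) and commute; a product `P Q` of
commuting positive semidefinite matrices is positive semidefinite because it equals `√P Q √P`.
-/

open Matrix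

open scoped MatrixOrder ComplexOrder

namespace Matrix

variable {𝕜 n : Type*} [RCLike 𝕜] [Fintype n] [DecidableEq n]

theorem PosSemidef.mul_of_commute {P Q : Matrix n n 𝕜} (hP : P.PosSemidef) (hQ : Q.PosSemidef)
    (h : Commute P Q) : (P * Q).PosSemidef := by
  have hroot : CFC.sqrt P * CFC.sqrt P = P := CFC.sqrt_mul_sqrt_self P hP.nonneg
  have hcomm : Commute (CFC.sqrt P) Q := h.cfcₙ_nnreal NNReal.sqrt
  have hconj : P * Q = star (CFC.sqrt P) * Q * CFC.sqrt P := by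
    rw [(CFC.sqrt_nonneg P).isSelfAdjoint.star_eq, mul_assoc, ← hcomm.eq, ← mul_assoc, hroot]
  rw [hconj]
  exact (star_left_conjugate_nonneg hQ.nonneg _).posSemidef

theorem PosSemidef.one_sub_mul_self {B : Matrix n n 𝕜} (hB : B.PosSemidef)
    (hBI : (1 - B).PosSemidef) : (1 - B * B).PosSemidef := by
  have hprod := hBI.mul_of_commute (PosSemidef.one.add hB)
    ((Commute.one_right _).add_right ((Commute.one_left B).sub_left (Commute.refl B)))
  rwa [show (1 - B) * (1 + B) = 1 - B * B by noncomm_ring] at hprod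

theorem IsHermitian.posSemidef_sub_smul_one {A : Matrix n n 𝕜} (hA : A.IsHermitian) {c : ℝ}
    (h : ∀ i, c ≤ hA.eigenvalues i) : (A - c • (1 : Matrix n n 𝕜)).PosSemidef := by
  rw [← Algebra.algebraMap_eq_smul_one, ← le_iff, algebraMap_le_iff_le_spectrum hA.isSelfAdjoint,
    hA.spectrum_real_eq_range_eigenvalues]
  rintro _ ⟨i, rfl⟩
  exact h i

end Matrix

theorem lamMin_le_eigenvalues {d : ℕ} {A : Matrix (Fin d) (Fin d) ℝ} (hA : A.IsHermitian)
    (i : Fin d) : lamMin A ≤ hA.eigenvalues i := by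
  rw [lamMin, dif_pos hA]
  exact ciInf_le (Set.finite_range _).bddBelow i

theorem posSemidef_sub_smul_one_of_le_lamMin {d : ℕ} {A : Matrix (Fin d) (Fin d) ℝ}
    (hA : A.IsHermitian) {c : ℝ} (hc : c ≤ lamMin A) :
    (A - c • (1 : Matrix (Fin d) (Fin d) ℝ)).PosSemidef :=
  hA.posSemidef_sub_smul_one fun i => hc.trans (lamMin_le_eigenvalues hA i)

/-- For real symmetric positive semidefinite `A`, `S` and a real symmetric `B` with
`0 ⪯ B ⪯ I` commuting with `A`, one has
`(I - B²) A + B S B ⪰ min (λmin A) (λmin S) • I` in the Loewner order. -/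
theorem combination_ge_min_lamMin_smul_one
    {d : ℕ} (A S B : Matrix (Fin d) (Fin d) ℝ)
    (hA : A.PosSemidef) (hS : S.PosSemidef) (hB : B.PosSemidef)
    (hBI : ((1 : Matrix (Fin d) (Fin d) ℝ) - B).PosSemidef)
    (hcomm : B * A = A * B) :
    ((((1 : Matrix (Fin d) (Fin d) ℝ) - B * B) * A + B * S * B) -
      min (lamMin A) (lamMin S) • (1 : Matrix (Fin d) (Fin d) ℝ)).PosSemidef := by
  set m := min (lamMin A) (lamMin S)
  have hAm : (A - m • 1).PosSemidef :=
    posSemidef_sub_smul_one_of_le_lamMin hA.1 (min_le_left _ _)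
  have hSm : (S - m • 1).PosSemidef :=
    posSemidef_sub_smul_one_of_le_lamMin hS.1 (min_le_right _ _)
  have hBA : Commute B A := hcomm
  have hfactors_comm : Commute (1 - B * B) (A - m • 1) :=
    ((Commute.one_left A).sub_left (hBA.mul_left hBA)).sub_right
      ((Commute.one_right _).smul_right m)
  have hsplit : (1 - B * B) * A + B * S * B - m • 1 =
      (1 - B * B) * (A - m • 1) + B * (S - m • 1) * B := by
    simp only [mul_sub, sub_mul, Matrix.mul_smul, Matrix.smul_mul, mul_one, one_mul]
    abel
  rw [hsplit]
  refine ((hB.one_sub_mul_self hBI).mul_of_commute hAm hfactors_comm).add ?_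
  simpa only [hB.1.eq] using hSm.mul_mul_conjTranspose_same B
end

section
/- Let A and Σ be real symmetric positive definite d×d matrices, and set M = A (A + I)^{-1}. Then the matrix (Σ + I)^{-1} − (A + I)^{-1} + I is positive definite, the matrix A + M (Σ − A) M is positive definite, and its inverse satisfies (A + M (Σ − A) M)^{-1} = A^{-1} + I − ((Σ + I)^{-1} − (A + I)^{-1} + I)^{-1}. Equivalently, the EM covariance update for centered Gaussians under the AWGN channel, defined through the precision update Σ'^{-1} = A^{-1} + I − ((Σ+I)^{-1} − (A+I)^{-1} + I)^{-1}, equals Σ' = A + M (Σ − A) M. -/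
/-!
With `C = A⁻¹ + I` one has `M = A (A + I)⁻¹ = C⁻¹ = I - (A + I)⁻¹`, and since
`C A C = A + I + C`, the EM update is a congruence: `A + M (Σ - A) M = C⁻¹ (Σ + I + C) C⁻¹`,
which is positive definite. The matrix `(Σ + I)⁻¹ - (A + I)⁻¹ + I` is `P⁻¹ + C⁻¹` with
`P = Σ + I`, and the claimed precision is the matrix identity
`C - (P⁻¹ + C⁻¹)⁻¹ = C (P + C)⁻¹ C`.
-/

open Matrix

namespace Matrix

variable {n α : Type*} [Fintype n] [DecidableEq n] [CommRing α]

theorem mul_add_one_inv {A : Matrix n n α} (hA : IsUnit A.det) :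
    A * (A + 1)⁻¹ = (A⁻¹ + 1)⁻¹ := by
  have h : (A + 1) * A⁻¹ = A⁻¹ + 1 := by
    rw [add_mul, mul_nonsing_inv A hA, one_mul, add_comm]
  rw [← h, mul_inv_rev, nonsing_inv_nonsing_inv A hA]

theorem mul_add_one_inv_eq_one_sub {A : Matrix n n α} (hA : IsUnit (A + 1).det) :
    A * (A + 1)⁻¹ = 1 - (A + 1)⁻¹ := by
  calc A * (A + 1)⁻¹ = (A + 1 - 1) * (A + 1)⁻¹ := by rw [add_sub_cancel_right]
    _ = 1 - (A + 1)⁻¹ := by rw [sub_mul, mul_nonsing_inv _ hA, one_mul]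

theorem inv_add_one_mul_mul_inv_add_one {A : Matrix n n α} (hA : IsUnit A.det) :
    (A⁻¹ + 1) * A * (A⁻¹ + 1) = A + 1 + (A⁻¹ + 1) := by
  rw [add_mul A⁻¹, nonsing_inv_mul A hA, one_mul, add_mul 1 A, one_mul, mul_add A,
    mul_nonsing_inv A hA, mul_one]
  abel

theorem add_conj_sub_eq_conj {A : Matrix n n α} (S : Matrix n n α) (hA : IsUnit A.det)
    (hC : IsUnit (A⁻¹ + 1).det) :
    A + (A⁻¹ + 1)⁻¹ * (S - A) * (A⁻¹ + 1)⁻¹ =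
      (A⁻¹ + 1)⁻¹ * (S + 1 + (A⁻¹ + 1)) * (A⁻¹ + 1)⁻¹ := by
  set C := A⁻¹ + 1
  have hconj : C⁻¹ * (A + 1 + C) * C⁻¹ = A := by
    rw [← inv_add_one_mul_mul_inv_add_one hA, Matrix.mul_assoc,
      mul_nonsing_inv_cancel_right _ _ hC, nonsing_inv_mul_cancel_left _ _ hC]
  calc A + C⁻¹ * (S - A) * C⁻¹ = C⁻¹ * (A + 1 + C) * C⁻¹ + C⁻¹ * (S - A) * C⁻¹ := by
        rw [hconj]
    _ = C⁻¹ * (S + 1 + C) * C⁻¹ := by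
        rw [← add_mul, ← mul_add]
        congr 2
        abel

theorem sub_inv_add_inv_eq {P C : Matrix n n α} (hP : IsUnit P.det) (hC : IsUnit C.det)
    (hPC : IsUnit (P + C).det) :
    C - (P⁻¹ + C⁻¹)⁻¹ = C * (P + C)⁻¹ * C := by
  have hunit : IsUnit P ↔ IsUnit C :=
    iff_of_true ((isUnit_iff_isUnit_det P).mpr hP) ((isUnit_iff_isUnit_det C).mpr hC)
  rw [inv_add_inv hunit, mul_inv_rev, mul_inv_rev, nonsing_inv_nonsing_inv P hP,
    nonsing_inv_nonsing_inv C hC, ← mul_assoc]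
  calc C - C * (P + C)⁻¹ * P = C * (P + C)⁻¹ * (P + C) - C * (P + C)⁻¹ * P := by
        rw [nonsing_inv_mul_cancel_right _ _ hPC]
    _ = C * (P + C)⁻¹ * C := by rw [mul_add, add_sub_cancel_left]

theorem inv_conj_inv_eq_sub_inv_add_inv {P C : Matrix n n α} (hP : IsUnit P.det)
    (hC : IsUnit C.det) (hPC : IsUnit (P + C).det) :
    (C⁻¹ * (P + C) * C⁻¹)⁻¹ = C - (P⁻¹ + C⁻¹)⁻¹ := by
  rw [sub_inv_add_inv_eq hP hC hPC, mul_inv_rev, mul_inv_rev, nonsing_inv_nonsing_inv C hC,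
    mul_assoc]

end Matrix

/-- **EM covariance update equals the SCSI covariance update at `ε = 1`** (Gaussian AWGN).
For symmetric positive definite `A` and `Sig`, with `M = A (A + I)⁻¹`:
the matrix `(Sig + I)⁻¹ - (A + I)⁻¹ + I` is positive definite, the matrix
`A + M (Sig - A) M` is positive definite, and
`(A + M (Sig - A) M)⁻¹ = A⁻¹ + I - ((Sig + I)⁻¹ - (A + I)⁻¹ + I)⁻¹`. -/
theorem em_update_eq_scsi_update
    {d : ℕ} (A Sig : Matrix (Fin d) (Fin d) ℝ)
    (hA : A.PosDef) (hSig : Sig.PosDef)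
    (M : Matrix (Fin d) (Fin d) ℝ) (hM : M = A * (A + 1)⁻¹) :
    ((Sig + 1)⁻¹ - (A + 1)⁻¹ + 1).PosDef ∧
      (A + M * (Sig - A) * M).PosDef ∧
      (A + M * (Sig - A) * M)⁻¹ =
        A⁻¹ + 1 - ((Sig + 1)⁻¹ - (A + 1)⁻¹ + 1)⁻¹ := by
  subst hM
  have hP : (Sig + 1).PosDef := hSig.add .one
  have hC : (A⁻¹ + 1).PosDef := hA.inv.add .one
  have hPC : (Sig + 1 + (A⁻¹ + 1)).PosDef := hP.add hC
  have hAdet := (isUnit_iff_isUnit_det A).mp hA.isUnit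
  have hCdet := (isUnit_iff_isUnit_det _).mp hC.isUnit
  have hN : (Sig + 1)⁻¹ - (A + 1)⁻¹ + 1 = (Sig + 1)⁻¹ + (A⁻¹ + 1)⁻¹ := by
    rw [← mul_add_one_inv hAdet,
      mul_add_one_inv_eq_one_sub ((isUnit_iff_isUnit_det _).mp (hA.add .one).isUnit)]
    abel
  rw [hN, mul_add_one_inv hAdet, add_conj_sub_eq_conj Sig hAdet hCdet]
  refine ⟨hP.inv.add hC.inv, ?_, ?_⟩
  · simpa only [hC.inv.isHermitian.eq] using
      hPC.conjTranspose_mul_mul_same (mulVec_injective_iff_isUnit.mpr hC.inv.isUnit)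
  · exact inv_conj_inv_eq_sub_inv_add_inv ((isUnit_iff_isUnit_det _).mp hP.isUnit) hCdet
      ((isUnit_iff_isUnit_det _).mp hPC.isUnit)
end

section
/- Let X be a Polish space (complete separable metric space with its Borel σ-algebra) and let μ and ν be Borel probability measures on X. Then the Kullback–Leibler divergence admits the Donsker–Varadhan variational representation: KL(μ ‖ ν) = sup over all bounded continuous functions f : X → ℝ of ( ∫ f dμ − log ∫ e^f dν ), where both sides take values in [0, ∞]. -/
open MeasureTheory
open scoped ENNReal Classical

/-- Kullback–Leibler divergence `KL(μ ‖ ν) = ∫ log (dμ/dν) dμ` when `μ ≪ ν` (and the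
log-likelihood ratio is integrable, which for probability measures is equivalent to the
integral being finite), and `KL(μ ‖ ν) = ∞` otherwise; valued in `[0, ∞]`. -/
noncomputable def klDiv {X : Type*} [MeasurableSpace X] (μ ν : Measure X) : ℝ≥0∞ :=
  if μ ≪ ν ∧ Integrable (llr μ ν) μ then ENNReal.ofReal (∫ x, llr μ ν x ∂μ) else ⊤

/-!
Tilting `ν` by `e^f` gives `∫ f dμ - log ∫ e^f dν = KL(μ ‖ ν) - KL(μ ‖ ν_f) ≤ KL(μ ‖ ν)`
(Gibbs), hence `≥`. For `≤` it suffices to take the supremum over bounded measurable `g`: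
on functions bounded by `c` the functional `∫ g dμ - log ∫ e^g dν` is `(1 + e^{2c})`-Lipschitz
for the `L¹(μ + ν)` distance, and on a metrizable space bounded continuous functions, clamped to
`[-c, c]`, are `L¹(μ + ν)`-dense among them. The truncations `g_n` of the log-likelihood ratio
have `∫ e^{g_n} dν ≤ 1 + e^{-n}` and `∫ g_n dμ ≥ ∫ min(n, log dμ/dν) dμ`, which tends to
`KL(μ ‖ ν)` by monotone convergence, also when it is infinite. If `μ` is not absolutely
continuous, multiples of the indicator of a `ν`-null set of positive `μ`-measure do it.
-/

open Real Filter Topology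
open scoped BoundedContinuousFunction

noncomputable def dvFunctional {X : Type*} [MeasurableSpace X] (μ ν : Measure X)
    (g : X → ℝ) : ℝ :=
  (∫ x, g x ∂μ) - log (∫ x, exp (g x) ∂ν)

lemma exp_sub_exp_le_exp_mul_abs {a b c : ℝ} (ha : a ≤ c) : exp a - exp b ≤ exp c * |a - b| :=
  calc exp a - exp b ≤ exp a * (a - b) := by
        have : exp a * (1 + (b - a)) ≤ exp b :=
          calc exp a * (1 + (b - a)) ≤ exp a * exp (b - a) :=
                mul_le_mul_of_nonneg_left (by linarith [add_one_le_exp (b - a)]) (exp_pos a).le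
            _ = exp b := by rw [← exp_add, add_sub_cancel]
        linarith
    _ ≤ exp a * |a - b| := mul_le_mul_of_nonneg_left (le_abs_self _) (exp_pos a).le
    _ ≤ exp c * |a - b| := mul_le_mul_of_nonneg_right (exp_le_exp.2 ha) (abs_nonneg _)

lemma abs_sub_max_min_le {a c : ℝ} (t : ℝ) (ha : |a| ≤ c) :
    |a - max (min t c) (-c)| ≤ |a - t| := by
  obtain ⟨h₁, h₂⟩ := abs_le.1 ha
  rcases le_total t c with h | h
  · rw [min_eq_left h]
    rcases le_total t (-c) with h' | h'
    · rw [max_eq_right h', abs_of_nonneg (by linarith), abs_of_nonneg (by linarith)]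
      linarith
    · rw [max_eq_left h']
  · rw [min_eq_right h, max_eq_left (by linarith), abs_of_nonpos (by linarith),
      abs_of_nonpos (by linarith)]
    linarith

lemma abs_min_le_add_exp_neg {a : ℝ} (ha : 0 ≤ a) (t : ℝ) : |min a t| ≤ a + exp (-t) := by
  rcases le_total a t with h | h
  · rw [min_eq_left h, abs_of_nonneg ha]
    linarith [exp_pos (-t)]
  · rw [min_eq_right h, abs_le]
    constructor <;> linarith [add_one_le_exp (-t), exp_pos (-t)]

lemma integral_tendsto_atTop_of_tendsto_of_monotone {X : Type*} [MeasurableSpace X]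
    {μ : Measure X} {f : ℕ → X → ℝ} {F : X → ℝ} (hf : ∀ n, Integrable (f n) μ)
    (hF : ¬ Integrable F μ) (h_mono : ∀ᵐ x ∂μ, Monotone fun n ↦ f n x)
    (h_tendsto : ∀ᵐ x ∂μ, Tendsto (fun n ↦ f n x) atTop (𝓝 (F x))) :
    Tendsto (fun n ↦ ∫ x, f n x ∂μ) atTop atTop := by
  refine tendsto_atTop_atTop_of_monotone
    (fun m n hmn ↦ integral_mono_ae (hf m) (hf n) (h_mono.mono fun x hx ↦ hx hmn)) fun M ↦ ?_
  by_contra! hM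
  have h_nonneg : ∀ n, 0 ≤ᵐ[μ] fun x ↦ f n x - f 0 x :=
    fun n ↦ h_mono.mono fun x hx ↦ sub_nonneg.2 (hx (Nat.zero_le n))
  have hF_nonneg : 0 ≤ᵐ[μ] fun x ↦ F x - f 0 x := by
    filter_upwards [h_mono, h_tendsto] with x hx_mono hx_tendsto
    exact sub_nonneg.2 (ge_of_tendsto' hx_tendsto fun n ↦ hx_mono (Nat.zero_le n))
  have h_lim : Tendsto (fun n ↦ ∫⁻ x, ENNReal.ofReal (f n x - f 0 x) ∂μ) atTop
      (𝓝 (∫⁻ x, ENNReal.ofReal (F x - f 0 x) ∂μ)) :=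
    lintegral_tendsto_of_tendsto_of_monotone
      (fun n ↦ ((hf n).sub (hf 0)).aemeasurable.ennreal_ofReal)
      (h_mono.mono fun x hx m n hmn ↦ ENNReal.ofReal_le_ofReal (sub_le_sub_right (hx hmn) _))
      (h_tendsto.mono fun x hx ↦ (ENNReal.continuous_ofReal.tendsto _).comp (hx.sub_const _))
  have h_bound : ∫⁻ x, ENNReal.ofReal (F x - f 0 x) ∂μ ≤ ENNReal.ofReal (M - ∫ x, f 0 x ∂μ) := by
    refine le_of_tendsto' h_lim fun n ↦ ?_
    rw [← ofReal_integral_eq_lintegral_ofReal (f := fun x ↦ f n x - f 0 x)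
      ((hf n).sub (hf 0)) (h_nonneg n), integral_sub (hf n) (hf 0)]
    exact ENNReal.ofReal_le_ofReal (sub_le_sub_right (hM n).le _)
  have hF_meas := aestronglyMeasurable_of_tendsto_ae atTop (fun n ↦ (hf n).1) h_tendsto
  have := (lintegral_ofReal_ne_top_iff_integrable (hF_meas.sub (hf 0).1) hF_nonneg).1
    (ne_top_of_le_ne_top ENNReal.ofReal_ne_top h_bound)
  exact hF (by simpa using this.add (hf 0))

section Functional

variable {X : Type*} [MeasurableSpace X] {μ ν : Measure X}

lemma integrable_of_abs_le [IsFiniteMeasure μ] {g : X → ℝ} (hg : Measurable g) {c : ℝ}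
    (hc : ∀ x, |g x| ≤ c) : Integrable g μ :=
  .of_bound hg.aestronglyMeasurable c (ae_of_all _ hc)

lemma integrable_exp_of_le [IsFiniteMeasure μ] {g : X → ℝ} (hg : Measurable g) {c : ℝ}
    (hc : ∀ x, g x ≤ c) : Integrable (fun x ↦ exp (g x)) μ :=
  .of_bound hg.exp.aestronglyMeasurable (exp c) <| ae_of_all _ fun x ↦ by
    rw [norm_of_nonneg (exp_pos _).le]; exact exp_le_exp.2 (hc x)

variable [IsProbabilityMeasure μ] [IsProbabilityMeasure ν]

lemma dvFunctional_le_integral_llr (hμν : μ ≪ ν) (h_int : Integrable (llr μ ν) μ) {f : X → ℝ}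
    (hfμ : Integrable f μ) (hfν : Integrable (fun x ↦ exp (f x)) ν) :
    dvFunctional μ ν f ≤ ∫ x, llr μ ν x ∂μ := by
  have := isProbabilityMeasure_tilted hfν
  have h_nonneg := InformationTheory.integral_llr_add_sub_measure_univ_nonneg
    (hμν.trans (absolutelyContinuous_tilted hfν))
    (integrable_llr_tilted_right hμν hfμ h_int hfν)
  rw [integral_llr_tilted_right hμν hfμ hfν h_int] at h_nonneg
  simp only [probReal_univ, add_sub_cancel_right] at h_nonneg
  rw [dvFunctional]
  linarith

lemma ofReal_dvFunctional_le_klDiv {f : X → ℝ} (hfμ : Integrable f μ)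
    (hfν : Integrable (fun x ↦ exp (f x)) ν) :
    ENNReal.ofReal (dvFunctional μ ν f) ≤ klDiv μ ν := by
  unfold klDiv
  split_ifs with h
  · exact ENNReal.ofReal_le_ofReal (dvFunctional_le_integral_llr h.1 h.2 hfμ hfν)
  · exact le_top

lemma log_integral_exp_le_add {f g : X → ℝ} (hf : Measurable f) (hg : Measurable g) {c : ℝ}
    (hfc : ∀ x, |f x| ≤ c) (hgc : ∀ x, |g x| ≤ c) :
    log (∫ x, exp (f x) ∂ν) ≤ log (∫ x, exp (g x) ∂ν) + exp (2 * c) * ∫ x, |g x - f x| ∂ν := by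
  have hef := integrable_exp_of_le (μ := ν) hf fun x ↦ (abs_le.1 (hfc x)).2
  have heg := integrable_exp_of_le (μ := ν) hg fun x ↦ (abs_le.1 (hgc x)).2
  have hfg : Integrable (fun x ↦ |g x - f x|) ν :=
    ((integrable_of_abs_le hg hgc).sub (integrable_of_abs_le hf hfc)).abs
  set A := ∫ x, exp (g x) ∂ν
  set B := ∫ x, exp (f x) ∂ν
  set I := ∫ x, |g x - f x| ∂ν
  have hA : exp (-c) ≤ A := by
    simpa using integral_mono (integrable_const _) heg fun x ↦
      exp_le_exp.2 (neg_le_of_abs_le (hgc x))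
  have hBA : B - A ≤ exp c * I := by
    rw [← integral_sub hef heg, ← integral_const_mul]
    refine integral_mono (hef.sub heg) (hfg.const_mul _) fun x ↦ ?_
    rw [abs_sub_comm]
    exact exp_sub_exp_le_exp_mul_abs (abs_le.1 (hfc x)).2
  have hA_pos : 0 < A := (exp_pos _).trans_le hA
  have hI : 0 ≤ I := integral_nonneg fun x ↦ abs_nonneg _
  calc log B ≤ log A + (B / A - 1) := by
        rw [← sub_le_iff_le_add', ← log_div (integral_exp_pos hef).ne' hA_pos.ne']
        exact log_le_sub_one_of_pos (div_pos (integral_exp_pos hef) hA_pos)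
    _ ≤ log A + exp (2 * c) * I := by
        rw [div_sub_one hA_pos.ne', add_le_add_iff_left, div_le_iff₀ hA_pos]
        calc B - A ≤ exp c * I := hBA
          _ = exp (2 * c) * I * exp (-c) := by
            rw [mul_right_comm, ← exp_add]; ring_nf
          _ ≤ exp (2 * c) * I * A := by gcongr

lemma dvFunctional_le_add {f g : X → ℝ} (hf : Measurable f) (hg : Measurable g) {c : ℝ}
    (hfc : ∀ x, |f x| ≤ c) (hgc : ∀ x, |g x| ≤ c) :
    dvFunctional μ ν g ≤ dvFunctional μ ν f + (1 + exp (2 * c)) * ∫ x, |g x - f x| ∂(μ + ν) := by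
  have hfg : Integrable (fun x ↦ |g x - f x|) (μ + ν) :=
    ((integrable_of_abs_le hg hgc).sub (integrable_of_abs_le hf hfc)).abs
  have hμ : ∫ x, g x ∂μ - ∫ x, f x ∂μ ≤ ∫ x, |g x - f x| ∂μ := by
    rw [← integral_sub (integrable_of_abs_le hg hgc) (integrable_of_abs_le hf hfc)]
    exact integral_mono ((integrable_of_abs_le hg hgc).sub (integrable_of_abs_le hf hfc))
      (integrable_add_measure.1 hfg).1 fun x ↦ le_abs_self _
  have hν := log_integral_exp_le_add (ν := ν) hf hg hfc hgc
  rw [integral_add_measure (integrable_add_measure.1 hfg).1 (integrable_add_measure.1 hfg).2]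
  have : 0 ≤ ∫ x, |g x - f x| ∂μ := integral_nonneg fun x ↦ abs_nonneg _
  have : 0 ≤ ∫ x, |g x - f x| ∂ν := integral_nonneg fun x ↦ abs_nonneg _
  unfold dvFunctional
  nlinarith [exp_pos (2 * c)]

end Functional

section Approximation

variable {X : Type*} [TopologicalSpace X] [MeasurableSpace X] [BorelSpace X]

lemma exists_boundedContinuous_abs_le_integral_abs_sub_le [NormalSpace X] {ρ : Measure X}
    [IsFiniteMeasure ρ] [ρ.WeaklyRegular] {g : X → ℝ} (hg : Measurable g) {c : ℝ}
    (hc : ∀ x, |g x| ≤ c) {ε : ℝ} (hε : 0 < ε) :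
    ∃ f : X →ᵇ ℝ, (∀ x, |f x| ≤ c) ∧ ∫ x, |g x - f x| ∂ρ ≤ ε := by
  obtain ⟨h, hh, hh_int⟩ :=
    (integrable_of_abs_le (μ := ρ) hg hc).exists_boundedContinuous_integral_sub_le hε
  let f : X →ᵇ ℝ := h ⊓ .const X c ⊔ .const X (-c)
  have hf_apply : ∀ x, f x = max (min (h x) c) (-c) := fun x ↦ rfl
  have hgf : Integrable (fun x ↦ g x - f x) ρ := (integrable_of_abs_le hg hc).sub (f.integrable ρ)
  have hgh : Integrable (fun x ↦ g x - h x) ρ := (integrable_of_abs_le hg hc).sub hh_int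
  refine ⟨f, fun x ↦ ?_, (integral_mono hgf.abs hgh.norm fun x ↦ ?_).trans hh⟩
  · have := (abs_nonneg _).trans (hc x)
    rw [hf_apply]
    exact abs_le.2 ⟨le_max_right _ _, max_le (min_le_right _ _) (by linarith)⟩
  · exact abs_sub_max_min_le (h x) (hc x)

variable [TopologicalSpace.PseudoMetrizableSpace X] {μ ν : Measure X} [IsProbabilityMeasure μ]
  [IsProbabilityMeasure ν]

lemma exists_boundedContinuous_dvFunctional_ge {g : X → ℝ} (hg : Measurable g) {c : ℝ}
    (hc : ∀ x, |g x| ≤ c) {ε : ℝ} (hε : 0 < ε) :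
    ∃ f : X →ᵇ ℝ, dvFunctional μ ν g ≤ dvFunctional μ ν f + ε := by
  have hK : 0 < 1 + exp (2 * c) := by positivity
  obtain ⟨f, hfc, hfg⟩ := exists_boundedContinuous_abs_le_integral_abs_sub_le (ρ := μ + ν) hg hc
    (div_pos hε hK)
  refine ⟨f, (dvFunctional_le_add f.continuous.measurable hg hfc hc).trans ?_⟩
  grw [hfg, mul_div_cancel₀ _ hK.ne']

lemma ofReal_dvFunctional_le_iSup {g : X → ℝ} (hg : Measurable g) {c : ℝ}
    (hc : ∀ x, |g x| ≤ c) :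
    ENNReal.ofReal (dvFunctional μ ν g) ≤ ⨆ f : X →ᵇ ℝ, ENNReal.ofReal (dvFunctional μ ν f) := by
  refine ENNReal.le_of_forall_pos_le_add fun ε hε _ ↦ ?_
  obtain ⟨f, hf⟩ := exists_boundedContinuous_dvFunctional_ge (μ := μ) (ν := ν) hg hc hε
  calc ENNReal.ofReal (dvFunctional μ ν g) ≤ ENNReal.ofReal (dvFunctional μ ν f) + ε := by
        simpa using (ENNReal.ofReal_le_ofReal hf).trans ENNReal.ofReal_add_le
    _ ≤ _ := by gcongr; exact le_iSup_of_le f le_rfl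

end Approximation

section Truncation

variable {X : Type*} [MeasurableSpace X] (μ ν : Measure X)

/-- Clamping the density rather than `llr μ ν` sends the zero set of the density to `-n`, not to
`log 0 = 0`; this is what keeps `∫ exp (truncLlr μ ν n) dν ≤ 1 + exp (-n)`. -/
noncomputable def truncLlr (n : ℕ) (x : X) : ℝ :=
  log (max (exp (-n)) (min (exp n) (μ.rnDeriv ν x).toReal))

lemma measurable_truncLlr (n : ℕ) : Measurable (truncLlr μ ν n) := by
  unfold truncLlr; fun_prop

lemma abs_truncLlr_le (n : ℕ) (x : X) : |truncLlr μ ν n x| ≤ n := by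
  have h_pos : 0 < max (exp (-n)) (min (exp n) (μ.rnDeriv ν x).toReal) :=
    (exp_pos _).trans_le (le_max_left _ _)
  refine abs_le.2 ⟨(le_log_iff_exp_le h_pos).2 (le_max_left _ _), (log_le_iff_le_exp h_pos).2 ?_⟩
  exact max_le (exp_le_exp.2 (by linarith [Nat.cast_nonneg (α := ℝ) n])) (min_le_left _ _)

lemma exp_truncLlr_le (n : ℕ) (x : X) :
    exp (truncLlr μ ν n x) ≤ exp (-n) + (μ.rnDeriv ν x).toReal := by
  rw [truncLlr, exp_log ((exp_pos _).trans_le (le_max_left _ _))]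
  exact max_le (le_add_of_nonneg_right ENNReal.toReal_nonneg)
    ((min_le_right _ _).trans (le_add_of_nonneg_left (exp_pos _).le))

lemma min_natCast_llr_le_truncLlr (n : ℕ) {x : X} (hx : 0 < (μ.rnDeriv ν x).toReal) :
    min (n : ℝ) (llr μ ν x) ≤ truncLlr μ ν n x := by
  rw [truncLlr, llr]
  rcases le_total (μ.rnDeriv ν x).toReal (exp n) with h | h
  · rw [min_eq_right h]
    exact (min_le_right _ _).trans (log_le_log hx (le_max_right _ _))
  · rw [min_eq_left h]
    exact (min_le_left _ _).trans ((log_exp _).symm.trans_le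
      (log_le_log (exp_pos _) (le_max_right _ _)))

variable {μ ν}

lemma integrable_min_natCast_llr [IsFiniteMeasure μ] [IsFiniteMeasure ν] (hμν : μ ≪ ν) (n : ℕ) :
    Integrable (fun x ↦ min (n : ℝ) (llr μ ν x)) μ := by
  have : Integrable (fun x ↦ (n : ℝ) + exp (-llr μ ν x)) μ :=
    (integrable_const _).add (Measure.integrable_toReal_rnDeriv.congr (exp_neg_llr hμν).symm)
  exact this.mono' (by fun_prop) (ae_of_all _ fun x ↦ abs_min_le_add_exp_neg n.cast_nonneg _)

variable [IsProbabilityMeasure μ] [IsProbabilityMeasure ν]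

lemma tendsto_ofReal_integral_min_natCast_llr (hμν : μ ≪ ν) :
    Tendsto (fun n : ℕ ↦ ENNReal.ofReal (∫ x, min (n : ℝ) (llr μ ν x) ∂μ)) atTop
      (𝓝 (klDiv μ ν)) := by
  have h_mono : ∀ᵐ x ∂μ, Monotone fun n : ℕ ↦ min (n : ℝ) (llr μ ν x) :=
    ae_of_all _ fun x m n hmn ↦ min_le_min_right _ (Nat.cast_le.2 hmn)
  have h_tendsto : ∀ᵐ x ∂μ, Tendsto (fun n : ℕ ↦ min (n : ℝ) (llr μ ν x)) atTop
      (𝓝 (llr μ ν x)) :=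
    ae_of_all _ fun x ↦ tendsto_const_nhds.congr' <|
      (tendsto_natCast_atTop_atTop.eventually_ge_atTop (llr μ ν x)).mono fun n hn ↦
        (min_eq_right hn).symm
  unfold klDiv
  split_ifs with h
  · exact ENNReal.tendsto_ofReal <| integral_tendsto_of_tendsto_of_monotone
      (integrable_min_natCast_llr hμν) h.2 h_mono h_tendsto
  · exact ENNReal.tendsto_ofReal_atTop.comp <| integral_tendsto_atTop_of_tendsto_of_monotone
      (integrable_min_natCast_llr hμν) (fun h_int ↦ h ⟨hμν, h_int⟩) h_mono h_tendsto

lemma log_integral_exp_truncLlr_le (hμν : μ ≪ ν) (n : ℕ) :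
    log (∫ x, exp (truncLlr μ ν n x) ∂ν) ≤ exp (-n) := by
  have h_int := integrable_exp_of_le (μ := ν) (measurable_truncLlr μ ν n) fun x ↦
    (abs_le.1 (abs_truncLlr_le μ ν n x)).2
  have h_le : ∫ x, exp (truncLlr μ ν n x) ∂ν ≤ 1 + exp (-n) := by
    calc ∫ x, exp (truncLlr μ ν n x) ∂ν ≤ ∫ x, (exp (-n) + (μ.rnDeriv ν x).toReal) ∂ν :=
          integral_mono h_int ((integrable_const _).add Measure.integrable_toReal_rnDeriv)
            (exp_truncLlr_le μ ν n)
      _ = 1 + exp (-n) := by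
          rw [integral_add (integrable_const _) Measure.integrable_toReal_rnDeriv,
            Measure.integral_toReal_rnDeriv hμν]
          simp [add_comm]
  calc log (∫ x, exp (truncLlr μ ν n x) ∂ν) ≤ log (1 + exp (-n)) :=
        log_le_log (integral_exp_pos h_int) h_le
    _ ≤ exp (-n) := by linarith [log_le_sub_one_of_pos (by positivity : 0 < 1 + exp (-(n : ℝ)))]

lemma integral_min_natCast_llr_le_dvFunctional (hμν : μ ≪ ν) (n : ℕ) :
    ∫ x, min (n : ℝ) (llr μ ν x) ∂μ ≤ dvFunctional μ ν (truncLlr μ ν n) + exp (-n) := by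
  have h_le : ∫ x, min (n : ℝ) (llr μ ν x) ∂μ ≤ ∫ x, truncLlr μ ν n x ∂μ := by
    refine integral_mono_ae (integrable_min_natCast_llr hμν n)
      (integrable_of_abs_le (measurable_truncLlr μ ν n) (abs_truncLlr_le μ ν n)) ?_
    filter_upwards [Measure.rnDeriv_pos hμν, hμν.ae_le (Measure.rnDeriv_lt_top μ ν)]
      with x h_pos h_top
    exact min_natCast_llr_le_truncLlr μ ν n (ENNReal.toReal_pos h_pos.ne' h_top.ne)
  have := log_integral_exp_truncLlr_le hμν n
  unfold dvFunctional
  linarith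

end Truncation

section UpperBound

variable {X : Type*} [MeasurableSpace X] {μ ν : Measure X}

lemma dvFunctional_indicator_const_of_measure_eq_zero [IsProbabilityMeasure ν] {s : Set X}
    (hs : MeasurableSet s) (hνs : ν s = 0) (a : ℝ) :
    dvFunctional μ ν (s.indicator fun _ ↦ a) = μ.real s * a := by
  have h_exp : (fun x ↦ exp (s.indicator (fun _ ↦ a) x)) =ᵐ[ν] fun _ ↦ 1 := by
    filter_upwards [measure_eq_zero_iff_ae_notMem.1 hνs] with x hx
    rw [Set.indicator_of_notMem hx, exp_zero]
  rw [dvFunctional, integral_indicator_const _ hs, integral_congr_ae h_exp]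
  simp

lemma klDiv_le_of_forall_ofReal_dvFunctional_le [IsProbabilityMeasure μ]
    [IsProbabilityMeasure ν] {S : ℝ≥0∞}
    (hS : ∀ (g : X → ℝ) (c : ℝ), Measurable g → (∀ x, |g x| ≤ c) →
      ENNReal.ofReal (dvFunctional μ ν g) ≤ S) :
    klDiv μ ν ≤ S := by
  by_cases hμν : μ ≪ ν
  · have h_err : Tendsto (fun n : ℕ ↦ S + ENNReal.ofReal (exp (-n))) atTop (𝓝 S) := by
      simpa using tendsto_const_nhds.add (ENNReal.tendsto_ofReal
        (tendsto_exp_neg_atTop_nhds_zero.comp tendsto_natCast_atTop_atTop))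
    refine le_of_tendsto_of_tendsto' (tendsto_ofReal_integral_min_natCast_llr hμν) h_err
      fun n ↦ ?_
    grw [integral_min_natCast_llr_le_dvFunctional hμν n, ENNReal.ofReal_add_le,
      hS _ _ (measurable_truncLlr μ ν n) (abs_truncLlr_le μ ν n)]
  · obtain ⟨s, hs, hνs, hμs⟩ : ∃ s, MeasurableSet s ∧ ν s = 0 ∧ μ s ≠ 0 := by
      by_contra! h
      exact hμν (.mk h)
    have h_pos : 0 < μ.real s := ENNReal.toReal_pos hμs (measure_ne_top μ s)
    have h_top : Tendsto (fun n : ℕ ↦ ENNReal.ofReal (μ.real s * n)) atTop (𝓝 ⊤) :=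
      ENNReal.tendsto_ofReal_atTop.comp (tendsto_natCast_atTop_atTop.const_mul_atTop h_pos)
    refine le_top.trans (le_of_tendsto' h_top fun n ↦ ?_)
    rw [← dvFunctional_indicator_const_of_measure_eq_zero hs hνs]
    refine hS _ n (measurable_const.indicator hs) fun x ↦ ?_
    by_cases hx : x ∈ s <;> simp [hx]

end UpperBound

/-- **Donsker–Varadhan variational representation of the KL divergence** on a Polish
space: `KL(μ ‖ ν) = sup_{f bounded continuous} ( ∫ f dμ - log ∫ e^f dν )`. -/
theorem klDiv_eq_donsker_varadhan
    {X : Type*} [TopologicalSpace X] [PolishSpace X] [MeasurableSpace X] [BorelSpace X]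
    (μ ν : Measure X) [IsProbabilityMeasure μ] [IsProbabilityMeasure ν] :
    klDiv μ ν = ⨆ f : BoundedContinuousFunction X ℝ,
      ENNReal.ofReal ((∫ x, f x ∂μ) - Real.log (∫ x, Real.exp (f x) ∂ν)) :=
  le_antisymm
    (klDiv_le_of_forall_ofReal_dvFunctional_le fun _ _ hg hc ↦ ofReal_dvFunctional_le_iSup hg hc)
    (iSup_le fun f ↦ ofReal_dvFunctional_le_klDiv (f.integrable μ)
      (integrable_exp_of_le f.continuous.measurable f.apply_le_norm))
end
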